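/- Let J be as given, with coding graph E_J. If a vertex (μ, eν) of E_J emits a positive edge, then every edge it emits is positive; moreover, writing for each edge from (μ, eν) to (δ, gγ) its L_J-label as the unique path α ∈ E^* with δ = να, the collection of these labels α over all edges emitted by (μ, eν) is a partition of r(μ). -/

import Mathlib

/-- A finite directed multigraph. -/
structure FinGraph where
  V : Type
  E : Type
  fintV : Fintype V
  fintE : Fintype E
  src : E → V
  rng : E → V

variable {G : FinGraph}

/-- A finite path in the graph `G`: a source vertex together with a compatible
list of edges (a vertex is a path of length 0). -/
structure FPath (G : FinGraph) where
  source : G.V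
  edges : List G.E
  head_src : ∀ e ∈ edges.head?, G.src e = source
  chain : edges.Chain' fun e f => G.rng e = G.src f

/-- The range (terminal vertex) of a finite path. -/
def FPath.range (p : FPath G) : G.V :=
  p.edges.getLast?.elim p.source G.rng

/-- The length-0 path at a vertex. -/
def FPath.nil (G : FinGraph) (v : G.V) : FPath G :=
  ⟨v, [], by simp, List.isChain_nil⟩

/-- `p.Prefix q` : the path `p` is an initial segment of the path `q`. -/
def FPath.Prefix (p q : FPath G) : Prop :=
  p.source = q.source ∧ p.edges <+: q.edges

/-- The path obtained by removing the first edge (the tail `κ` of `ν = eκ`). -/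
def FPath.tail (p : FPath G) : FPath G where
  source := p.edges.head?.elim p.source G.rng
  edges := p.edges.tail
  head_src := by
    cases hp : p.edges with
    | nil => simp
    | cons a l =>
      have h := p.chain
      rw [hp, List.Chain', List.isChain_cons] at h
      intro e he
      simp only [hp, List.head?_cons, Option.elim, List.tail_cons] at he ⊢
      exact (h.1 e he).symm
  chain := p.chain.tail

/-- An infinite path in the graph `G`. -/
structure IPath (G : FinGraph) where
  edges : ℕ → G.E
  chain : ∀ i, G.rng (edges i) = G.src (edges (i + 1))

/-- The source vertex of an infinite path. -/
def IPath.source (p : IPath G) : G.V := G.src (p.edges 0)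

/-- The cylinder set `Z(p)` of a finite path `p`: all infinite paths with prefix `p`. -/
def cylinder (p : FPath G) : Set (IPath G) :=
  {q | q.source = p.source ∧ ∀ i, (h : i < p.edges.length) → q.edges i = p.edges.get ⟨i, h⟩}

/-- A finite collection `S` of finite paths is a partition of the path `ν`:
the cylinder sets are pairwise disjoint with union `Z(ν)`. -/
def IsPartitionOfPath (S : Set (FPath G)) (ν : FPath G) : Prop :=
  S.Finite ∧ (∀ p ∈ S, ∀ q ∈ S, p ≠ q → cylinder p ∩ cylinder q = ∅) ∧
    (⋃ p ∈ S, cylinder p) = cylinder ν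

/-- A finite collection `S` of finite paths is a partition of the vertex `v`. -/
def IsPartitionOf (S : Set (FPath G)) (v : G.V) : Prop :=
  IsPartitionOfPath S (FPath.nil G v)

/-- Standing assumptions: no sinks, no sources, every cycle has an exit. -/
structure Standing (G : FinGraph) : Prop where
  no_sinks : ∀ v : G.V, ∃ e, G.src e = v
  no_sources : ∀ v : G.V, ∃ e, G.rng e = v
  cycles_exit : ∀ p : FPath G, p.edges ≠ [] → p.range = p.source →
    ∃ e ∈ p.edges, ∃ f, f ≠ e ∧ G.src f = G.src e

/-- The combinatorial conditions making `u_J = Σ_{(μ,ν) ∈ J} S_μ S_ν^*` a unitary: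
`J` is finite, `s(μ) = s(ν)`, `r(μ) = r(ν)`, `|ν| ≥ 1` for all `(μ,ν) ∈ J`, and both
families of cylinder sets are pairwise disjoint with union all of `E^∞`. -/
structure IsUnitaryJ (G : FinGraph) (J : Set (FPath G × FPath G)) : Prop where
  finite : J.Finite
  src_eq : ∀ p ∈ J, (Prod.fst p).source = (Prod.snd p).source
  rng_eq : ∀ p ∈ J, FPath.range (Prod.fst p) = FPath.range (Prod.snd p)
  ne_nil : ∀ p ∈ J, (Prod.snd p).edges ≠ []
  disj₁ : ∀ p ∈ J, ∀ q ∈ J, p ≠ q → cylinder (Prod.fst p) ∩ cylinder (Prod.fst q) = ∅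
  union₁ : (⋃ p ∈ J, cylinder (Prod.fst p)) = Set.univ
  disj₂ : ∀ p ∈ J, ∀ q ∈ J, p ≠ q → cylinder (Prod.snd p) ∩ cylinder (Prod.snd q) = ∅
  union₂ : (⋃ p ∈ J, cylinder (Prod.snd p)) = Set.univ

/-- Adjacency in the coding graph `E_J`: there is an edge from `p = (μ₁, e₁ν₁)` to
`q = (μ₂, e₂ν₂)` iff the tail `ν₁` and `μ₂` are prefix-comparable
(the combinatorial content of `S_{ν₁}^* S_{μ₂} ≠ 0`). -/
def CGAdj (p q : FPath G × FPath G) : Prop :=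
  FPath.Prefix p.2.tail q.1 ∨ FPath.Prefix q.1 p.2.tail

/-- The degree `|μ₂| − |ν₁|` of the coding-graph edge from `p` to `q`. -/
def cgDeg (p q : FPath G × FPath G) : ℤ :=
  (q.1.edges.length : ℤ) - (p.2.tail.edges.length : ℤ)

/-- `IsAppend p q r` : the path `r` is the concatenation `p q`. -/
def IsAppend (p q r : FPath G) : Prop :=
  r.source = p.source ∧ q.source = p.range ∧ r.edges = p.edges ++ q.edges

/-- A finite path in the coding graph `E_J`, recorded by the (nonempty) list of
vertices of `J` it visits (a single vertex is a path of length 0). -/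
structure CGPath (G : FinGraph) (J : Set (FPath G × FPath G)) where
  verts : List (FPath G × FPath G)
  ne : verts ≠ []
  mem : ∀ v ∈ verts, v ∈ J
  adj : verts.Chain' CGAdj

/-- The `E`-label of a path in the coding graph: the list of distinguished first
edges `e` of the second coordinates of the vertices it visits. -/
def CGPath.elabel {J : Set (FPath G × FPath G)} (ω : CGPath G J) : List G.E :=
  ω.verts.filterMap fun v => v.2.edges.head?

/-- `IsLabelOf l γ` : `γ` is the `L_J`-label of the coding-graph path visiting the
vertices in the list `l` (all of whose edges are non-negative): the concatenation of
the `L_J`-labels of its edges, and the empty path at `r(μ)` for the length-0 path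
at a vertex `(μ, eν)`. -/
inductive IsLabelOf : List (FPath G × FPath G) → FPath G → Prop
  | single (p : FPath G × FPath G) (γ : FPath G) :
      γ.edges = [] → γ.source = FPath.range p.1 → IsLabelOf [p] γ
  | cons (p q : FPath G × FPath G) (rest : List (FPath G × FPath G)) (α γ δ : FPath G) :
      IsAppend p.2.tail α q.1 → IsLabelOf (q :: rest) γ → IsAppend α γ δ →
      IsLabelOf (p :: q :: rest) δ

/-- Every edge of the coding graph `E_J` is non-negative. -/
def AllEdgesNonneg (G : FinGraph) (J : Set (FPath G × FPath G)) : Prop :=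
  ∀ p ∈ J, ∀ q ∈ J, CGAdj p q → 0 ≤ cgDeg p q

/-- The coding graph `E_J` contains a non-positive cycle. -/
def HasNonposCycle (G : FinGraph) (J : Set (FPath G × FPath G)) : Prop :=
  ∃ ω : CGPath G J, 2 ≤ ω.verts.length ∧ ω.verts.getLast ω.ne = ω.verts.head ω.ne ∧
    ω.verts.Chain' fun p q => cgDeg p q ≤ 0

/-- All outgoing edges of the vertex `p` in the coding graph `E_J` are positive. -/
def AllOutPositive (G : FinGraph) (J : Set (FPath G × FPath G))
    (p : FPath G × FPath G) : Prop :=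
  ∀ q ∈ J, CGAdj p q → 0 < cgDeg p q

/-- `IsSnoc p f q` : the path `q` is `p` extended by the single edge `f`. -/
def IsSnoc (p : FPath G) (f : G.E) (q : FPath G) : Prop :=
  q.source = p.source ∧ q.edges = p.edges ++ [f]

/-- `IsSplitting G J p J'` : `J'` is the splitting of `J` at the vertex `p = (μ, eν)`,
i.e. `J' = (J ∖ {(μ,eν)}) ∪ {(μf, eνf) : f ∈ E¹, s(f) = r(μ)}`. -/
def IsSplitting (G : FinGraph) (J : Set (FPath G × FPath G)) (p : FPath G × FPath G)
    (J' : Set (FPath G × FPath G)) : Prop :=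
  p ∈ J ∧ ∀ q, q ∈ J' ↔ (q ∈ J ∧ q ≠ p) ∨
    ∃ f, G.src f = FPath.range p.1 ∧ IsSnoc p.1 f q.1 ∧ IsSnoc p.2 f q.2

/-- The set of negative edges of the coding graph `E_J`. -/
def negEdgeSet (G : FinGraph) (J : Set (FPath G × FPath G)) :
    Set ((FPath G × FPath G) × (FPath G × FPath G)) :=
  {e | e.1 ∈ J ∧ e.2 ∈ J ∧ CGAdj e.1 e.2 ∧ cgDeg e.1 e.2 < 0}

/-- `IsFinalNeg G J p q ω d` : the edge from `p` to `q` in `E_J` is a final negative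
edge with destination `d`, via the zero path `ω` from `q` to `d`; the height of the
edge is `ω.verts.length - 1`. -/
def IsFinalNeg (G : FinGraph) (J : Set (FPath G × FPath G))
    (p q : FPath G × FPath G) (ω : CGPath G J) (d : FPath G × FPath G) : Prop :=
  p ∈ J ∧ q ∈ J ∧ CGAdj p q ∧ cgDeg p q < 0 ∧
    ω.verts.head ω.ne = q ∧ ω.verts.getLast ω.ne = d ∧
    (ω.verts.Chain' fun a b => cgDeg a b = 0) ∧ AllOutPositive G J d

/-- `(E_J, E)` is left-synchronizing with delay `m` : any two paths of length `m`
(i.e. with `m+1` vertices) in `E_J` with the same `E`-label have the same source. -/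
def LeftSyncDelay (G : FinGraph) (J : Set (FPath G × FPath G)) (m : ℕ) : Prop :=
  ∀ ω ξ : CGPath G J, ω.verts.length = m + 1 → ξ.verts.length = m + 1 →
    ω.elabel = ξ.elabel → ω.verts.head ω.ne = ξ.verts.head ξ.ne

/-- An infinite path in the coding graph `E_J`. -/
structure CGIPath (G : FinGraph) (J : Set (FPath G × FPath G)) where
  verts : ℕ → FPath G × FPath G
  mem : ∀ i, verts i ∈ J
  adj : ∀ i, CGAdj (verts i) (verts (i + 1))

/-- The infinite `E`-label of an infinite coding-graph path is the infinite path `α`. -/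
def ELabelInf {J : Set (FPath G × FPath G)} (ω : CGIPath G J) (α : IPath G) : Prop :=
  ∀ i, (ω.verts i).2.edges.head? = some (α.edges i)

/-- A transducer with input alphabet `A`, output alphabet `B`, a finite state set,
an initial state and a transition function. -/
structure Transducer (A B : Type) where
  S : Type
  finS : Finite S
  init : S
  tr : S → A → S × List B

/-- The state sequence of a transducer on an infinite input word. -/
def Transducer.states {A B : Type} (T : Transducer A B) (α : ℕ → A) : ℕ → T.S
  | 0 => T.init
  | n + 1 => (T.tr (T.states α n) (α n)).1

/-- The `n`-th output block of a transducer on an infinite input word. -/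
def Transducer.outBlock {A B : Type} (T : Transducer A B) (α : ℕ → A) (n : ℕ) : List B :=
  (T.tr (T.states α n) (α n)).2

/-- The concatenation of the first `n` blocks of a sequence of finite words. -/
def joinUpTo {X : Type} (f : ℕ → List X) (n : ℕ) : List X :=
  ((List.range n).map f).flatten

/-- Two infinite concatenations of sequences of finite words are equal. -/
def StreamsEq {X : Type} (f g : ℕ → List X) : Prop :=
  (∀ n, ∃ m, joinUpTo f n <+: joinUpTo g m) ∧ ∀ n, ∃ m, joinUpTo g n <+: joinUpTo f m

/-- The type of edges of the coding graph `E_J`. -/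
def CGEdgeT (G : FinGraph) (J : Set (FPath G × FPath G)) : Type :=
  {e : (FPath G × FPath G) × (FPath G × FPath G) // e.1 ∈ J ∧ e.2 ∈ J ∧ CGAdj e.1 e.2}

/-- The sequence of edges of an infinite coding-graph path. -/
def CGIPath.edgeSeq {J : Set (FPath G × FPath G)} (ω : CGIPath G J) (i : ℕ) : CGEdgeT G J :=
  ⟨(ω.verts i, ω.verts (i + 1)), ω.mem i, ω.mem (i + 1), ω.adj i⟩

/-! Write `ν` for the tail of the second coordinate of `p = (μ, eν)`. Since the cylinders `Z(μ')`,
`(μ', ν') ∈ J`, partition `E^∞` and are nonempty (there are no sinks), no `μ'` can be a prefix of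
another one. The positive edge gives `ν ≺ μ₀`; an edge of non-positive degree would give `μ' ≼ ν`,
hence `μ' ≼ μ₀`, which is impossible. So every `μ'` comparable with `ν` is of the form `να`, and
since `x ↦ νx` maps `Z(r(ν))` bijectively onto `Z(ν)`, sending `Z(α)` onto `Z(να)`, the labels `α`
inherit the partition property of the `μ'` inside `Z(ν)`. -/

theorem FPath.ext {p q : FPath G} (hs : p.source = q.source) (he : p.edges = q.edges) : p = q := by
  cases p; cases q
  cases hs; cases he
  rfl

theorem FPath.range_of_edges_eq_nil {p : FPath G} (h : p.edges = []) : p.range = p.source := by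
  simp [FPath.range, h]

theorem FPath.range_eq_rng_getLast {p : FPath G} (h : p.edges ≠ []) :
    p.range = G.rng (p.edges.getLast h) := by
  simp [FPath.range, List.getLast?_eq_some_getLast h]

theorem FPath.tail_range (p : FPath G) : p.tail.range = p.range := by
  rcases p with ⟨v, _ | ⟨a, _ | ⟨b, l⟩⟩, _, _⟩ <;> simp [FPath.range, FPath.tail, List.getLast?_cons]

theorem FPath.Prefix.trans {p q r : FPath G} (hpq : p.Prefix q) (hqr : q.Prefix r) : p.Prefix r :=
  ⟨hpq.1.trans hqr.1, hpq.2.trans hqr.2⟩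

theorem IsAppend.right_unique {p α β r : FPath G} (hα : IsAppend p α r) (hβ : IsAppend p β r) :
    α = β :=
  FPath.ext (hα.2.1.trans hβ.2.1.symm) (List.append_cancel_left (hα.2.2.symm.trans hβ.2.2))

theorem IsAppend.nil_right (p : FPath G) : IsAppend p (FPath.nil G p.range) p :=
  ⟨rfl, rfl, (List.append_nil _).symm⟩

theorem FPath.Prefix.exists_isAppend {p q : FPath G} (h : p.Prefix q) : ∃ α, IsAppend p α q := by
  obtain ⟨hs, l, hl⟩ := h
  have hchain : (p.edges ++ l).IsChain fun e f => G.rng e = G.src f := hl ▸ q.chain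
  obtain ⟨-, hl_chain, hjoin⟩ := List.isChain_append.mp hchain
  refine ⟨⟨p.range, l, fun f hf => ?_, hl_chain⟩, hs.symm, rfl, hl.symm⟩
  cases hlast : p.edges.getLast? with
  | none =>
    have hp : p.edges = [] := List.getLast?_eq_none_iff.mp hlast
    rw [FPath.range_of_edges_eq_nil hp, hs]
    exact q.head_src f (by simpa [← hl, hp] using hf)
  | some e => simpa [FPath.range, hlast] using (hjoin e hlast f hf).symm

theorem mem_cylinder_iff {p : FPath G} {y : IPath G} :
    y ∈ cylinder p ↔ y.source = p.source ∧ ∀ i (h : i < p.edges.length), y.edges i = p.edges[i] :=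
  Iff.rfl

theorem mem_cylinder_of_prefix {a b : FPath G} {y : IPath G} (hab : a.Prefix b)
    (hy : y ∈ cylinder b) : y ∈ cylinder a :=
  ⟨hy.1.trans hab.1.symm, fun i hi => by
    simpa [hab.2.getElem hi] using hy.2 i (Nat.lt_of_lt_of_le hi hab.2.length_le)⟩

theorem prefix_of_mem_cylinder {a b : FPath G} {y : IPath G} (ha : y ∈ cylinder a)
    (hb : y ∈ cylinder b) (hab : a.edges.length ≤ b.edges.length) : a.Prefix b := by
  refine ⟨ha.1.symm.trans hb.1, List.prefix_iff_eq_take.mpr (List.ext_getElem (by simpa) ?_)⟩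
  intro i hia _
  rw [List.getElem_take]
  simpa using (ha.2 i hia).symm.trans (hb.2 i (by omega))

theorem prefix_or_prefix_of_mem_cylinder {a b : FPath G} {y : IPath G} (ha : y ∈ cylinder a)
    (hb : y ∈ cylinder b) : a.Prefix b ∨ b.Prefix a := by
  rcases le_total a.edges.length b.edges.length with h | h
  · exact .inl (prefix_of_mem_cylinder ha hb h)
  · exact .inr (prefix_of_mem_cylinder hb ha h)

theorem exists_iPath_source (h : ∀ v : G.V, ∃ e, G.src e = v) (v : G.V) :
    ∃ x : IPath G, x.source = v := by
  choose f hf using h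
  exact ⟨⟨fun n => Nat.rec (motive := fun _ => G.E) (f v) (fun _ e => f (G.rng e)) n,
    fun _ => (hf _).symm⟩, hf v⟩

def FPath.concat (p : FPath G) (x : IPath G) (hx : x.source = p.range) : IPath G where
  edges i := if h : i < p.edges.length then p.edges[i] else x.edges (i - p.edges.length)
  chain i := by
    by_cases h₁ : i + 1 < p.edges.length
    · simp only [dif_pos h₁, dif_pos (Nat.lt_of_succ_lt h₁)]
      exact List.isChain_iff_getElem.mp p.chain i h₁
    by_cases h₀ : i < p.edges.length
    · have hne : p.edges ≠ [] := List.ne_nil_of_length_pos (by omega)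
      have hi : i = p.edges.length - 1 := by omega
      simp only [dif_pos h₀, dif_neg h₁, show i + 1 - p.edges.length = 0 by omega]
      rw [← IPath.source, hx, FPath.range_eq_rng_getLast hne, List.getLast_eq_getElem]
      simp only [hi]
    · simp only [dif_neg h₀, dif_neg h₁, show i + 1 - p.edges.length = i - p.edges.length + 1 by
        omega]
      exact x.chain _

theorem FPath.concat_edges_add (p : FPath G) (x : IPath G) (hx : x.source = p.range) (j : ℕ) :
    (p.concat x hx).edges (p.edges.length + j) = x.edges j := by
  simp [FPath.concat]

theorem FPath.concat_source (p : FPath G) (x : IPath G) (hx : x.source = p.range) :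
    (p.concat x hx).source = p.source := by
  by_cases hp : p.edges = []
  · have : (p.concat x hx).edges 0 = x.edges 0 := by simp [FPath.concat, hp]
    rw [IPath.source, this, ← IPath.source, hx, FPath.range_of_edges_eq_nil hp]
  · have h0 : 0 < p.edges.length := List.length_pos_iff.mpr hp
    have : (p.concat x hx).edges 0 = p.edges[0] := by simp [FPath.concat, h0]
    rw [IPath.source, this]
    exact p.head_src _ (by simp [List.head?_eq_getElem?, h0])

theorem FPath.concat_mem_cylinder_iff {p α r : FPath G} (hap : IsAppend p α r) {x : IPath G}
    (hx : x.source = p.range) : p.concat x hx ∈ cylinder r ↔ x ∈ cylinder α := by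
  obtain ⟨hs, hαs, he⟩ := hap
  rcases r with ⟨_, _, _, _⟩
  dsimp only at hs he
  subst hs he
  simp only [mem_cylinder_iff, FPath.concat_source, hx, hαs, true_and, List.length_append]
  constructor
  · intro h j hj
    rw [← FPath.concat_edges_add p x hx, h _ (by omega), List.getElem_append_right (by omega)]
    simp
  · intro h i hi
    by_cases hip : i < p.edges.length
    · simp [FPath.concat, hip, List.getElem_append_left hip]
    · obtain ⟨j, rfl⟩ := Nat.exists_eq_add_of_le (Nat.le_of_not_lt hip)
      rw [FPath.concat_edges_add, h j (by omega), List.getElem_append_right (by omega)]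
      simp

theorem FPath.concat_mem_cylinder (p : FPath G) (x : IPath G) (hx : x.source = p.range) :
    p.concat x hx ∈ cylinder p :=
  (FPath.concat_mem_cylinder_iff (IsAppend.nil_right p) hx).mpr ⟨hx, nofun⟩

theorem cylinder_nonempty (hG : ∀ v : G.V, ∃ e, G.src e = v) (p : FPath G) :
    (cylinder p).Nonempty := by
  obtain ⟨x, hx⟩ := exists_iPath_source hG p.range
  exact ⟨p.concat x hx, p.concat_mem_cylinder x hx⟩

section IsUnitaryJ

variable {J : Set (FPath G × FPath G)}

theorem IsUnitaryJ.eq_of_mem_cylinder_fst (hJ : IsUnitaryJ G J) {q q' : FPath G × FPath G}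
    (hq : q ∈ J) (hq' : q' ∈ J) {y : IPath G} (hy : y ∈ cylinder q.1) (hy' : y ∈ cylinder q'.1) :
    q = q' := by
  by_contra hne
  exact (Set.eq_empty_iff_forall_notMem.mp (hJ.disj₁ q hq q' hq' hne)) y ⟨hy, hy'⟩

theorem IsUnitaryJ.eq_of_prefix_fst (hJ : IsUnitaryJ G J) (hG : ∀ v : G.V, ∃ e, G.src e = v)
    {q q' : FPath G × FPath G} (hq : q ∈ J) (hq' : q' ∈ J) (h : q.1.Prefix q'.1) : q = q' := by
  obtain ⟨y, hy⟩ := cylinder_nonempty hG q'.1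
  exact hJ.eq_of_mem_cylinder_fst hq hq' (mem_cylinder_of_prefix h hy) hy

theorem IsUnitaryJ.isPartitionOf_residuals (hJ : IsUnitaryJ G J) (ν : FPath G)
    (hν : ∀ q ∈ J, ν.Prefix q.1 ∨ q.1.Prefix ν → ν.Prefix q.1) :
    IsPartitionOf {α | ∃ q ∈ J, (ν.Prefix q.1 ∨ q.1.Prefix ν) ∧ IsAppend ν α q.1} ν.range := by
  refine ⟨?finite, ?disjoint, ?union⟩
  case finite =>
    refine (hJ.finite.biUnion fun q _ => Set.Subsingleton.finite
      (s := {α | IsAppend ν α q.1}) fun α hα β hβ => hα.right_unique hβ).subset ?_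
    rintro α ⟨q, hq, -, hα⟩
    exact Set.mem_biUnion hq hα
  case disjoint =>
    rintro α ⟨q, hq, -, hα⟩ β ⟨q', hq', -, hβ⟩ hne
    refine Set.eq_empty_iff_forall_notMem.mpr fun x ⟨hxα, hxβ⟩ => hne ?_
    have hx : x.source = ν.range := hxα.1.trans hα.2.1
    obtain rfl : q = q' := hJ.eq_of_mem_cylinder_fst hq hq'
      ((ν.concat_mem_cylinder_iff hα hx).mpr hxα) ((ν.concat_mem_cylinder_iff hβ hx).mpr hxβ)
    exact hα.right_unique hβ
  case union =>
    ext x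
    simp only [Set.mem_iUnion]
    constructor
    · rintro ⟨α, ⟨q, -, -, hα⟩, hxα⟩
      exact ⟨hxα.1.trans hα.2.1, nofun⟩
    · rintro ⟨hx, -⟩
      have hy : ν.concat x hx ∈ ⋃ q ∈ J, cylinder q.1 := hJ.union₁ ▸ Set.mem_univ _
      obtain ⟨q, hq, hyq⟩ := Set.mem_iUnion₂.mp hy
      have hcomp := prefix_or_prefix_of_mem_cylinder (ν.concat_mem_cylinder x hx) hyq
      obtain ⟨α, hα⟩ := (hν q hq hcomp).exists_isAppend
      exact ⟨α, ⟨q, hq, hcomp, hα⟩, (ν.concat_mem_cylinder_iff hα hx).mp hyq⟩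

end IsUnitaryJ

section CodingGraph

variable {J : Set (FPath G × FPath G)} {p q : FPath G × FPath G}

theorem CGAdj.prefix_of_cgDeg_pos (h : CGAdj p q) (hd : 0 < cgDeg p q) : p.2.tail.Prefix q.1 := by
  refine h.resolve_right fun hqp => ?_
  have := hqp.2.length_le
  simp only [cgDeg] at hd
  omega

theorem CGAdj.prefix_of_cgDeg_nonpos (h : CGAdj p q) (hd : cgDeg p q ≤ 0) :
    q.1.Prefix p.2.tail := by
  rcases h with hpq | hqp
  · simp only [cgDeg] at hd
    have hlen := hpq.2.eq_of_length (by have := hpq.2.length_le; omega)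
    exact ⟨hpq.1.symm, hlen ▸ List.prefix_refl _⟩
  · exact hqp

theorem allOutPositive_of_cgDeg_pos (hG : ∀ v : G.V, ∃ e, G.src e = v) (hJ : IsUnitaryJ G J)
    {q₀ : FPath G × FPath G} (hq₀ : q₀ ∈ J) (hadj : CGAdj p q₀) (hd : 0 < cgDeg p q₀) :
    AllOutPositive G J p := by
  intro q hq hadj'
  by_contra! hd'
  obtain rfl : q = q₀ := hJ.eq_of_prefix_fst hG hq hq₀
    ((hadj'.prefix_of_cgDeg_nonpos hd').trans (hadj.prefix_of_cgDeg_pos hd))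
  exact not_lt.mpr hd' hd

end CodingGraph

/-- Lemma 3.4(ii): if a vertex `(μ, eν)` of `E_J` emits a positive edge,
then every edge it emits is positive, and the `L_J`-labels `α` (with `δ = να`) of the
edges it emits form a partition of `r(μ)`. -/
theorem pos_edge_labels_partition (G : FinGraph) (hG : Standing G)
    (J : Set (FPath G × FPath G)) (hJ : IsUnitaryJ G J)
    (p : FPath G × FPath G) (hp : p ∈ J)
    (hpos : ∃ q ∈ J, CGAdj p q ∧ 0 < cgDeg p q) :
    (∀ q ∈ J, CGAdj p q → 0 < cgDeg p q) ∧
    IsPartitionOf {α : FPath G | ∃ q ∈ J, CGAdj p q ∧ IsAppend p.2.tail α q.1}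
      (FPath.range p.1) := by
  obtain ⟨q₀, hq₀, hadj₀, hd₀⟩ := hpos
  have hout : AllOutPositive G J p := allOutPositive_of_cgDeg_pos hG.no_sinks hJ hq₀ hadj₀ hd₀
  have hrange : p.2.tail.range = p.1.range := p.2.tail_range.trans (hJ.rng_eq p hp).symm
  refine ⟨hout, hrange ▸ hJ.isPartitionOf_residuals p.2.tail fun q hq hadj => ?_⟩
  exact CGAdj.prefix_of_cgDeg_pos hadj (hout q hq hadj)
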